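/- arXiv:2506.16477 — 5 statements merged into one kernel-verified Lean document; each statement's English description precedes it below -/
import Mathlib

section
/- In a tree rooted at r, a vertex c is the lowest common ancestor of u and v (i.e., c is an ancestor of both u and v, and every common ancestor of u and v is an ancestor of c) if and only if c minimizes D(x) = d(u,x) + d(v,x) + d(r,x) over all vertices x. -/
open SimpleGraph

/-- `a` lies on the unique path from `b` to `c` in a tree (metric characterization). -/
def SimpleGraph.onPath {V : Type*} (G : SimpleGraph V) (a b c : V) : Prop :=
  G.dist b a + G.dist a c = G.dist b c

namespace LCAAux

variable {V : Type*} {G : SimpleGraph V}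

open SimpleGraph.Walk

/-- Splitting a shortest walk at a support vertex gives shortest pieces. -/
lemma split_lengths [DecidableEq V] (hG : G.Connected) {a b x : V} (w : G.Walk a b)
    (hw : w.length = G.dist a b) (hx : x ∈ w.support) :
    (w.takeUntil x hx).length = G.dist a x ∧ (w.dropUntil x hx).length = G.dist x b := by
  have h1 := SimpleGraph.dist_le (w.takeUntil x hx)
  have h2 := SimpleGraph.dist_le (w.dropUntil x hx)
  have h3 : (w.takeUntil x hx).length + (w.dropUntil x hx).length = w.length := by
    conv_rhs => rw [← w.take_spec hx]
    rw [Walk.length_append]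
  have h4 : G.dist a b ≤ G.dist a x + G.dist x b := hG.dist_triangle
  omega

/-- In a tree, every path realizes the distance between its endpoints. -/
lemma path_length_eq_dist (hG : G.IsTree) {a b : V} (p : G.Walk a b) (hp : p.IsPath) :
    p.length = G.dist a b := by
  obtain ⟨q, hq⟩ := hG.isConnected.exists_walk_length_eq_dist a b
  have hqp : q.IsPath := q.isPath_of_length_eq_dist hq
  have := hG.IsAcyclic.path_unique ⟨p, hp⟩ ⟨q, hqp⟩
  have : p = q := congrArg Subtype.val this
  rw [this]; exact hq

/-- Appending two paths that intersect only at the junction is a path. -/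
lemma isPath_append {a b c : V} {p : G.Walk a b} {q : G.Walk b c}
    (hp : p.IsPath) (hq : q.IsPath)
    (hmeet : ∀ z ∈ p.support, z ∈ q.support → z = b) : (p.append q).IsPath := by
  rw [Walk.isPath_def, Walk.support_append]
  refine List.Nodup.append hp.support_nodup ?_ ?_
  · exact hq.support_nodup.tail
  · intro z hz hz'
    have hzq : z ∈ q.support := List.mem_of_mem_tail hz'
    have : z = b := hmeet z hz hzq
    subst this
    have := hq.support_nodup
    rw [q.support_eq_cons] at this
    exact (List.nodup_cons.mp this).1 hz'

/-- In a tree, a vertex metrically on the path from `a` to `b` lies on any shortest walk. -/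
lemma mem_support_of_onPath (hG : G.IsTree) {a b x : V} (w : G.Walk a b)
    (hw : w.length = G.dist a b) (h : G.dist a x + G.dist x b = G.dist a b) :
    x ∈ w.support := by
  obtain ⟨p1, hp1⟩ := hG.isConnected.exists_walk_length_eq_dist a x
  obtain ⟨p2, hp2⟩ := hG.isConnected.exists_walk_length_eq_dist x b
  have hlen : (p1.append p2).length = G.dist a b := by
    rw [Walk.length_append, hp1, hp2, h]
  have hwp : w.IsPath := w.isPath_of_length_eq_dist hw
  have hwp' : (p1.append p2).IsPath := (p1.append p2).isPath_of_length_eq_dist hlen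
  have := hG.IsAcyclic.path_unique ⟨w, hwp⟩ ⟨p1.append p2, hwp'⟩
  have hweq : w = p1.append p2 := congrArg Subtype.val this
  rw [hweq, Walk.mem_support_append_iff]
  exact Or.inl p1.end_mem_support

/-- Betweenness: two vertices on the path from `a` to `b` are ordered by distance to `a`. -/
lemma between (hG : G.IsTree) {a b x y : V}
    (hx : G.dist a x + G.dist x b = G.dist a b)
    (hy : G.dist a y + G.dist y b = G.dist a b)
    (hxy : G.dist a x ≤ G.dist a y) :
    G.dist a x + G.dist x y = G.dist a y ∧ G.dist x y + G.dist y b = G.dist x b := by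
  classical
  obtain ⟨w, hw⟩ := hG.isConnected.exists_walk_length_eq_dist a b
  have hxm : x ∈ w.support := mem_support_of_onPath hG w hw hx
  have hym : y ∈ w.support := mem_support_of_onPath hG w hw hy
  obtain ⟨ht, hd⟩ := split_lengths hG.isConnected w hw hxm
  rw [← w.take_spec hxm, Walk.mem_support_append_iff] at hym
  have hcomm : G.dist x y = G.dist y x := SimpleGraph.dist_comm
  rcases hym with hym | hym
  · -- y on the first segment
    obtain ⟨h1, h2⟩ := split_lengths hG.isConnected (w.takeUntil x hxm) ht hym
    have key : G.dist a y + G.dist y x = G.dist a x := by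
      have := congrArg Walk.length (Walk.take_spec (w.takeUntil x hxm) hym)
      rw [Walk.length_append, h1, h2] at this
      omega
    omega
  · -- y on the second segment
    obtain ⟨h1, h2⟩ := split_lengths hG.isConnected (w.dropUntil x hxm) hd hym
    have key : G.dist x y + G.dist y b = G.dist x b := by
      have := congrArg Walk.length (Walk.take_spec (w.dropUntil x hxm) hym)
      rw [Walk.length_append, h1, h2] at this
      omega
    omega

/-- Median existence in a tree. -/
lemma median (hG : G.IsTree) (u v r : V) :
    ∃ m : V, G.dist u m + G.dist m v = G.dist u v ∧
      G.dist u m + G.dist m r = G.dist u r ∧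
      G.dist v m + G.dist m r = G.dist v r := by
  classical
  obtain ⟨w, hw⟩ := hG.isConnected.exists_walk_length_eq_dist u v
  have hwp : w.IsPath := w.isPath_of_length_eq_dist hw
  obtain ⟨m, hm, hmin⟩ : ∃ m ∈ w.support.toFinset, ∀ z ∈ w.support.toFinset,
      G.dist m r ≤ G.dist z r := by
    refine Finset.exists_min_image _ (fun z => G.dist z r) ?_
    exact ⟨u, by simp⟩
  rw [List.mem_toFinset] at hm
  have hmin' : ∀ z ∈ w.support, G.dist m r ≤ G.dist z r := fun z hz =>
    hmin z (List.mem_toFinset.mpr hz)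
  obtain ⟨htake, hdrop⟩ := split_lengths hG.isConnected w hw hm
  obtain ⟨q, hq⟩ := hG.isConnected.exists_walk_length_eq_dist m r
  have hqp : q.IsPath := q.isPath_of_length_eq_dist hq
  -- q meets w only at m
  have hmeet : ∀ z ∈ q.support, z ∈ w.support → z = m := by
    intro z hzq hzw
    obtain ⟨hq1, hq2⟩ := split_lengths hG.isConnected q hq hzq
    have h1 : G.dist m z + G.dist z r = G.dist m r := by
      have := congrArg Walk.length (Walk.take_spec q hzq)
      rw [Walk.length_append, hq1, hq2] at this
      omega
    have h2 := hmin' z hzw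
    have h3 : G.dist m z = 0 := by omega
    exact ((hG.isConnected.dist_eq_zero_iff).mp h3).symm
  refine ⟨m, ?_, ?_, ?_⟩
  · -- on u-v path
    have := congrArg Walk.length (Walk.take_spec w hm)
    rw [Walk.length_append, htake, hdrop, hw] at this
    have : G.dist u m + G.dist m v = G.dist u v := this
    exact this
  · -- dist u m + dist m r = dist u r
    have hpath : ((w.takeUntil m hm).append q).IsPath := by
      refine isPath_append (hwp.takeUntil hm) hqp ?_
      intro z hz hz'
      exact hmeet z hz' (w.support_takeUntil_subset hm hz)
    have := path_length_eq_dist hG _ hpath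
    rw [Walk.length_append, htake, hq] at this
    exact this
  · -- dist v m + dist m r = dist v r
    have hrp : (w.dropUntil m hm).reverse.IsPath := (hwp.dropUntil hm).reverse
    have hpath : ((w.dropUntil m hm).reverse.append q).IsPath := by
      refine isPath_append hrp hqp ?_
      intro z hz hz'
      rw [Walk.support_reverse, List.mem_reverse] at hz
      exact hmeet z hz' (w.support_dropUntil_subset hm hz)
    have := path_length_eq_dist hG _ hpath
    rw [Walk.length_append, Walk.length_reverse, hdrop, hq] at this
    have e : G.dist m v = G.dist v m := SimpleGraph.dist_comm
    omega

end LCAAux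

/-- In a tree rooted at `r`, `c` is the LCA of `u` and `v` (c is a common ancestor of u and v,
and every common ancestor of u and v is an ancestor of c) iff `c` minimizes
`D(x) = d(u,x)+d(v,x)+d(r,x)`. An ancestor of `b` w.r.t. root `r` is a vertex on the
path from `b` to `r`. -/
theorem stmt2 {V : Type*} [Fintype V] (G : SimpleGraph V) (hG : G.IsTree) (u v r c : V) :
    (G.onPath c u r ∧ G.onPath c v r ∧
      ∀ c' : V, G.onPath c' u r → G.onPath c' v r → G.onPath c' c r) ↔
    (∀ x : V, G.dist u c + G.dist v c + G.dist r c ≤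
      G.dist u x + G.dist v x + G.dist r x) := by
  classical
  obtain ⟨m, hm1, hm2, hm3⟩ := LCAAux.median hG u v r
  have tri : ∀ a b c : V, G.dist a c ≤ G.dist a b + G.dist b c :=
    fun _ _ _ => hG.isConnected.dist_triangle
  have dzero : ∀ a b : V, G.dist a b = 0 → a = b :=
    fun a b h => (hG.isConnected.dist_eq_zero_iff).mp h
  have dcomm : ∀ a b : V, G.dist a b = G.dist b a := fun a b => SimpleGraph.dist_comm
  -- lower bound: 2*D(x) ≥ S
  have lower : ∀ x : V, G.dist u v + G.dist u r + G.dist v r ≤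
      2 * (G.dist u x + G.dist v x + G.dist r x) := by
    intro x
    have h1 := tri u x v
    have h2 := tri u x r
    have h3 := tri v x r
    have e1 := dcomm x v
    have e2 := dcomm x r
    have e3 := dcomm r x
    omega
  have Dm : 2 * (G.dist u m + G.dist v m + G.dist r m) =
      G.dist u v + G.dist u r + G.dist v r := by
    have e1 := dcomm v m
    have e2 := dcomm r m
    omega
  simp only [SimpleGraph.onPath]
  constructor
  · rintro ⟨h1, h2, h3⟩
    -- show c = m
    have hmcr : G.dist c m + G.dist m r = G.dist c r := by
      have hmu : G.dist u m + G.dist m r = G.dist u r := hm2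
      have hmv : G.dist v m + G.dist m r = G.dist v r := hm3
      exact h3 m hmu hmv
    have huc : G.dist u c ≤ G.dist u m := by omega
    have hvc : G.dist v c ≤ G.dist v m := by omega
    have b1 := (LCAAux.between hG h1 hm2 huc).1
    have b2 := (LCAAux.between hG h2 hm3 hvc).1
    have huv := tri u c v
    have e0 := dcomm m v
    have e1 := dcomm c v
    have e2 := dcomm c m
    have hcm : G.dist c m = 0 := by omega
    have : c = m := dzero c m hcm
    subst this
    intro x
    have := lower x
    have e3 := dcomm v c
    have e4 := dcomm r c
    omega
  · intro hmin
    have hDc := hmin m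
    have hlc := lower c
    have h1 := tri u c r
    have h2 := tri v c r
    have h3 := tri u c v
    have e1 := dcomm c v
    have e2 := dcomm c r
    have e3 := dcomm r c
    have e4 := dcomm v c
    have e5 := dcomm r m
    have e6 := dcomm v m
    have onp1 : G.dist u c + G.dist c r = G.dist u r := by omega
    have onp2 : G.dist v c + G.dist c r = G.dist v r := by omega
    have onp3 : G.dist u c + G.dist c v = G.dist u v := by omega
    refine ⟨onp1, onp2, ?_⟩
    intro c' h1' h2'
    rcases le_total (G.dist u c') (G.dist u c) with hle | hle
    · -- c' closer to u on the u-r path: show c' = c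
      have b1 := (LCAAux.between hG h1' onp1 hle).1
      have hvc' : G.dist v c' ≤ G.dist v c := by omega
      have b2 := (LCAAux.between hG h2' onp2 hvc').1
      have huv := tri u c' v
      have f1 := dcomm c' v
      have f2 := dcomm c' c
      have f3 := dcomm c c'
      have hcc' : G.dist c c' = 0 := by omega
      have : c = c' := dzero c c' hcc'
      subst this
      have : G.dist c c = 0 := by
        rw [SimpleGraph.dist_self]
      omega
    · have b := (LCAAux.between hG onp1 h1' hle).2
      have f2 := dcomm c c'
      omega
end

section
/- For any four vertices u, v, r, r' in a tree, the multiset {LCA(u,v,r), LCA(u,r',r), LCA(v,r',r)} contains at most two distinct values, and LCA(u,v,r') equals the XOR of these three, i.e., LCA(u,v,r') equals the one of the three values that appears an odd number of times. -/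
open SimpleGraph

section Aux
variable {V : Type*} {G : SimpleGraph V}

lemma isPath_of_length_eq_dist {a b : V} (w : G.Walk a b) (hw : w.length = G.dist a b) :
    w.IsPath := by
  classical
  have h1 := G.dist_le w.bypass
  have h2 := w.length_bypass_le
  have h3 : w.bypass = w := w.bypass_eq_self_of_length_le (by omega)
  rw [← h3]; exact w.bypass_isPath

lemma walk_split {a b x : V} (hconn : G.Connected) (w : G.Walk a b)
    (hw : w.length = G.dist a b) (hx : x ∈ w.support) :
    G.dist a x + G.dist x b = G.dist a b := by
  classical
  have h1 : G.dist a x ≤ (w.takeUntil x hx).length := G.dist_le _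
  have h2 : G.dist x b ≤ (w.dropUntil x hx).length := G.dist_le _
  have h3 : (w.takeUntil x hx).length + (w.dropUntil x hx).length = w.length := by
    rw [← SimpleGraph.Walk.length_append, SimpleGraph.Walk.take_spec]
  have h4 := hconn.dist_triangle (u := a) (v := x) (w := b)
  omega

lemma path_length_eq_dist (hG : G.IsTree) {a b : V} (p : G.Walk a b) (hp : p.IsPath) :
    p.length = G.dist a b := by
  obtain ⟨w, hw⟩ := hG.isConnected.exists_walk_length_eq_dist a b
  have hwp : w.IsPath := isPath_of_length_eq_dist w hw
  obtain ⟨q, -, hq⟩ := hG.existsUnique_path a b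
  rw [hq p hp, ← hq w hwp, hw]

lemma between_mem_geodesic (hG : G.IsTree) {a b x : V}
    (hx : G.dist a x + G.dist x b = G.dist a b)
    (w : G.Walk a b) (hw : w.length = G.dist a b) : x ∈ w.support := by
  obtain ⟨p, hp⟩ := hG.isConnected.exists_walk_length_eq_dist a x
  obtain ⟨q, hq⟩ := hG.isConnected.exists_walk_length_eq_dist x b
  have hlen : (p.append q).length = G.dist a b := by
    rw [SimpleGraph.Walk.length_append]; omega
  have hpath := isPath_of_length_eq_dist _ hlen
  have hwp := isPath_of_length_eq_dist w hw
  obtain ⟨P, -, hP⟩ := hG.existsUnique_path a b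
  have heq : p.append q = w := by rw [hP _ hpath, hP w hwp]
  rw [← heq, SimpleGraph.Walk.mem_support_append_iff]
  exact Or.inl p.end_mem_support

lemma between_trans (hG : G.IsTree) {a b x y : V}
    (hx : G.dist a x + G.dist x b = G.dist a b)
    (hy : G.dist a y + G.dist y b = G.dist a b)
    (hxy : G.dist a x ≤ G.dist a y) :
    G.dist a x + G.dist x y = G.dist a y := by
  classical
  obtain ⟨w, hw⟩ := hG.isConnected.exists_walk_length_eq_dist a b
  have hxm := between_mem_geodesic hG hx w hw
  have hym := between_mem_geodesic hG hy w hw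
  have h3 : (w.takeUntil y hym).length + (w.dropUntil y hym).length = w.length := by
    rw [← SimpleGraph.Walk.length_append, SimpleGraph.Walk.take_spec]
  have h1 : G.dist a y ≤ (w.takeUntil y hym).length := G.dist_le _
  have h2 : G.dist y b ≤ (w.dropUntil y hym).length := G.dist_le _
  have hT : (w.takeUntil y hym).length = G.dist a y := by omega
  have hD : (w.dropUntil y hym).length = G.dist y b := by omega
  have hsplit : x ∈ (w.takeUntil y hym).support ∨ x ∈ (w.dropUntil y hym).support := by
    rw [← SimpleGraph.Walk.mem_support_append_iff, SimpleGraph.Walk.take_spec]; exact hxm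
  rcases hsplit with h | h
  · exact walk_split hG.isConnected _ hT h
  · have h5 := walk_split hG.isConnected _ hD h
    have c1 : G.dist y x = G.dist x y := dist_comm
    omega

lemma glue (hG : G.IsTree) {s m c : V} (X : G.Walk s m) (hXp : X.IsPath)
    (P : G.Walk m c) (hPp : P.IsPath)
    (hdisj : ∀ z, z ∈ X.support → z ∈ P.support → z = m) :
    G.dist s m + G.dist m c = G.dist s c := by
  have hnod := hPp.support_nodup
  rw [P.support_eq_cons, List.nodup_cons] at hnod
  have hQpath : (X.append P).IsPath := by
    rw [SimpleGraph.Walk.isPath_def, SimpleGraph.Walk.support_append]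
    refine List.Nodup.append hXp.support_nodup hnod.2 ?_
    intro z hz hz'
    have hzm : z = m := hdisj z hz (List.mem_of_mem_tail hz')
    exact hnod.1 (hzm ▸ hz')
  have hQ := path_length_eq_dist hG _ hQpath
  have hX := path_length_eq_dist hG X hXp
  have hP := path_length_eq_dist hG P hPp
  rw [SimpleGraph.Walk.length_append] at hQ
  omega

lemma exists_median (hG : G.IsTree) (a b c : V) :
    ∃ m : V, G.dist a m + G.dist m b = G.dist a b ∧
      G.dist a m + G.dist m c = G.dist a c ∧
      G.dist b m + G.dist m c = G.dist b c := by
  classical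
  obtain ⟨w, hw⟩ := hG.isConnected.exists_walk_length_eq_dist a b
  have hwpath := isPath_of_length_eq_dist w hw
  obtain ⟨m, hm⟩ : ∃ m, m ∈ w.support.argmin (fun x => G.dist x c) := by
    cases hargmin : w.support.argmin (fun x => G.dist x c) with
    | none => exact absurd (List.argmin_eq_none.mp hargmin) (w.support_ne_nil)
    | some m => exact ⟨m, by rw [Option.mem_def]⟩
  have hmem : m ∈ w.support := List.argmin_mem hm
  have hmin : ∀ z ∈ w.support, G.dist m c ≤ G.dist z c := fun z hz => List.le_of_mem_argmin hz hm
  have hsplit := walk_split hG.isConnected w hw hmem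
  obtain ⟨P, hP⟩ := hG.isConnected.exists_walk_length_eq_dist m c
  have hPpath := isPath_of_length_eq_dist P hP
  have hkey : ∀ z, z ∈ w.support → z ∈ P.support → z = m := by
    intro z hzw hzP
    have h6 := walk_split hG.isConnected P hP hzP
    have h7 := hmin z hzw
    have h8 : G.dist m z = 0 := by omega
    exact (hG.isConnected.dist_eq_zero_iff.mp h8).symm
  have hT : m ∈ w.support := hmem
  have h1 := glue hG (w.takeUntil m hmem) (hwpath.takeUntil hmem) P hPpath
    (fun z hz hz' => hkey z (w.support_takeUntil_subset hmem hz) hz')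
  have h2 := glue hG (w.dropUntil m hmem).reverse ((hwpath.dropUntil hmem).reverse) P hPpath
    (fun z hz hz' => hkey z (w.support_dropUntil_subset hmem (by
      rwa [SimpleGraph.Walk.support_reverse, List.mem_reverse] at hz)) hz')
  have c1 : G.dist m b = G.dist b m := dist_comm
  exact ⟨m, hsplit, h1, h2⟩
lemma median_prop (hG : G.IsTree) {a b c m : V}
    (h : ∀ x, G.dist a m + G.dist b m + G.dist c m ≤ G.dist a x + G.dist b x + G.dist c x) :
    G.dist a m + G.dist m b = G.dist a b ∧ G.dist a m + G.dist m c = G.dist a c ∧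
      G.dist b m + G.dist m c = G.dist b c := by
  obtain ⟨n, hn1, hn2, hn3⟩ := exists_median hG a b c
  have h1 := h n
  have t1 := hG.isConnected.dist_triangle (u := a) (v := m) (w := b)
  have t2 := hG.isConnected.dist_triangle (u := a) (v := m) (w := c)
  have t3 := hG.isConnected.dist_triangle (u := b) (v := m) (w := c)
  have c1 : G.dist b m = G.dist m b := dist_comm
  have c2 : G.dist c m = G.dist m c := dist_comm
  have c3 : G.dist b n = G.dist n b := dist_comm
  have c4 : G.dist c n = G.dist n c := dist_comm
  omega

lemma btw_trans' (hconn : G.Connected) {x a b y : V}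
    (h1 : G.dist x a + G.dist a y = G.dist x y)
    (h2 : G.dist a b + G.dist b y = G.dist a y) :
    G.dist x a + G.dist a b = G.dist x b := by
  have t1 := hconn.dist_triangle (u := x) (v := a) (w := b)
  have t2 := hconn.dist_triangle (u := x) (v := b) (w := y)
  omega

lemma eq_of_between (hG : G.IsTree) {a b x y : V}
    (hx : G.dist a x + G.dist x b = G.dist a b)
    (hy : G.dist a y + G.dist y b = G.dist a b)
    (hd : G.dist a x = G.dist a y) : x = y := by
  have h := between_trans hG hx hy (le_of_eq hd)
  have h0 : G.dist x y = 0 := by omega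
  exact hG.isConnected.dist_eq_zero_iff.mp h0

lemma key (hG : G.IsTree) {u v r r' p q : V}
    (hp : ∀ x, G.dist u p + G.dist v p + G.dist r p ≤ G.dist u x + G.dist v x + G.dist r x)
    (hq : ∀ x, G.dist u q + G.dist v q + G.dist r' q ≤ G.dist u x + G.dist v x + G.dist r' x)
    (hle : G.dist u p ≤ G.dist u q) :
    G.dist u r + G.dist v r' = G.dist u r' + G.dist v r ∨
    G.dist u v + G.dist r r' = G.dist u r' + G.dist v r := by
  have hconn := hG.isConnected
  obtain ⟨bp1, bp2, bp3⟩ := median_prop hG hp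
  obtain ⟨bq1, bq2, bq3⟩ := median_prop hG hq
  have hδ : G.dist u p + G.dist p q = G.dist u q := between_trans hG bp1 bq1 hle
  have hi : G.dist v p = G.dist v q + G.dist p q := by
    have c1 : G.dist p v = G.dist v p := dist_comm
    have c2 : G.dist q v = G.dist v q := dist_comm
    omega
  have hii : G.dist p r' = G.dist p q + G.dist q r' := by
    have t1 := hconn.dist_triangle (u := p) (v := q) (w := r')
    have t2 := hconn.dist_triangle (u := u) (v := p) (w := r')
    omega
  have hiii : G.dist u p + G.dist p r' = G.dist u r' := by omega
  obtain ⟨t, ht1, ht2, ht3⟩ := exists_median hG r r' p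
  have crt : G.dist r t = G.dist t r := dist_comm
  have cr't : G.dist r' t = G.dist t r' := dist_comm
  have ctp : G.dist t p = G.dist p t := dist_comm
  have crp : G.dist r p = G.dist p r := dist_comm
  have cr'p : G.dist r' p = G.dist p r' := dist_comm
  have htb : G.dist p t + G.dist t r' = G.dist p r' := by omega
  rcases le_total (G.dist p t) (G.dist p q) with hct | hct
  · right
    have htq : G.dist p t + G.dist t q = G.dist p q :=
      between_trans hG htb (by omega) hct
    have hut : G.dist u p + G.dist p t = G.dist u t := btw_trans' hconn hiii htb
    have hvt : G.dist v q + G.dist q t = G.dist v t := by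
      refine btw_trans' hconn (x := v) (a := q) (b := t) (y := p) ?_ ?_
      · have c1 : G.dist q p = G.dist p q := dist_comm
        omega
      · have c1 : G.dist q t = G.dist t q := dist_comm
        have c2 : G.dist q p = G.dist p q := dist_comm
        omega
    have hmin := hp t
    have ctq : G.dist t q = G.dist q t := dist_comm
    have hpt0 : G.dist p t = 0 := by omega
    have cpv : G.dist p v = G.dist v p := dist_comm
    omega
  · left
    have hqt : G.dist p q + G.dist q t = G.dist p t :=
      between_trans hG (by omega) htb hct
    have hqr : G.dist p q + G.dist q r = G.dist p r := by
      have t1 := hconn.dist_triangle (u := q) (v := t) (w := r)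
      have t2 := hconn.dist_triangle (u := p) (v := q) (w := r)
      omega
    have hδ0 : G.dist p q = 0 := by
      have t3 := hconn.dist_triangle (u := v) (v := q) (w := r)
      omega
    omega
end Aux

/-- Among `LCA(u,v,r)`, `LCA(u,r',r)`, `LCA(v,r',r)` there are at most two distinct values,
and `LCA(u,v,r')` equals their "XOR": if all three are equal it is that common value;
otherwise exactly two are equal and it is the remaining one. Here each LCA is the
(unique) minimizer of the corresponding sum of distances. -/
theorem stmt5 {V : Type*} [Fintype V] (G : SimpleGraph V) (hG : G.IsTree)
    (u v r r' c₁ c₂ c₃ cL : V)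
    (h₁ : ∀ x : V, G.dist u c₁ + G.dist v c₁ + G.dist r c₁ ≤
      G.dist u x + G.dist v x + G.dist r x)
    (h₂ : ∀ x : V, G.dist u c₂ + G.dist r' c₂ + G.dist r c₂ ≤
      G.dist u x + G.dist r' x + G.dist r x)
    (h₃ : ∀ x : V, G.dist v c₃ + G.dist r' c₃ + G.dist r c₃ ≤
      G.dist v x + G.dist r' x + G.dist r x)
    (hL : ∀ x : V, G.dist u cL + G.dist v cL + G.dist r' cL ≤
      G.dist u x + G.dist v x + G.dist r' x) :
    (c₁ = c₂ ∧ c₂ = c₃ ∧ cL = c₁) ∨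
    (c₁ = c₂ ∧ c₁ ≠ c₃ ∧ cL = c₃) ∨
    (c₁ = c₃ ∧ c₁ ≠ c₂ ∧ cL = c₂) ∨
    (c₂ = c₃ ∧ c₂ ≠ c₁ ∧ cL = c₁) := by
  obtain ⟨p1, p2, p3⟩ := median_prop hG h₁
  obtain ⟨q1, q2, q3⟩ := median_prop hG h₂
  obtain ⟨s1, s2, s3⟩ := median_prop hG h₃
  obtain ⟨l1, l2, l3⟩ := median_prop hG hL
  have cc1v : G.dist c₁ v = G.dist v c₁ := dist_comm
  have cc2r' : G.dist c₂ r' = G.dist r' c₂ := dist_comm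
  have cc3r' : G.dist c₃ r' = G.dist r' c₃ := dist_comm
  have ccLv : G.dist cL v = G.dist v cL := dist_comm
  have crr' : G.dist r r' = G.dist r' r := dist_comm
  have H : (G.dist u r + G.dist v r' = G.dist u r' + G.dist v r) ∨
      (G.dist u v + G.dist r r' = G.dist u r' + G.dist v r) ∨
      (G.dist u v + G.dist r r' = G.dist u r + G.dist v r') := by
    rcases le_total (G.dist u c₁) (G.dist u cL) with hle | hle
    · rcases key hG h₁ hL hle with h | h
      · exact Or.inl h
      · exact Or.inr (Or.inl h)
    · rcases key hG hL h₁ hle with h | h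
      · exact Or.inl h.symm
      · exact Or.inr (Or.inr (by omega))
  have hBCto23 : G.dist u r + G.dist v r' = G.dist u r' + G.dist v r → c₂ = c₃ :=
    fun hBC => eq_of_between hG q3 s3 (by omega)
  have hBCtoL1 : G.dist u r + G.dist v r' = G.dist u r' + G.dist v r → cL = c₁ :=
    fun hBC => eq_of_between hG l1 p1 (by omega)
  have hACto12 : G.dist u v + G.dist r r' = G.dist u r' + G.dist v r → c₁ = c₂ :=
    fun hAC => eq_of_between hG p2 q2 (by omega)
  have hACtoL3 : G.dist u v + G.dist r r' = G.dist u r' + G.dist v r → cL = c₃ :=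
    fun hAC => eq_of_between hG l3 s1 (by omega)
  have hABto13 : G.dist u v + G.dist r r' = G.dist u r + G.dist v r' → c₁ = c₃ :=
    fun hAB => eq_of_between hG p3 s2 (by omega)
  have hABtoL2 : G.dist u v + G.dist r r' = G.dist u r + G.dist v r' → cL = c₂ :=
    fun hAB => eq_of_between hG l2 q1 (by omega)
  have hc12 : c₁ = c₂ → G.dist u v + G.dist r r' = G.dist u r' + G.dist v r := by
    intro h; subst h; omega
  have hc13 : c₁ = c₃ → G.dist u v + G.dist r r' = G.dist u r + G.dist v r' := by
    intro h; subst h; omega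
  by_cases hBC : G.dist u r + G.dist v r' = G.dist u r' + G.dist v r
  · by_cases hAC : G.dist u v + G.dist r r' = G.dist u r' + G.dist v r
    · exact Or.inl ⟨hACto12 hAC, hBCto23 hBC, hBCtoL1 hBC⟩
    · exact Or.inr (Or.inr (Or.inr ⟨hBCto23 hBC, fun h => hAC (hc12 h.symm), hBCtoL1 hBC⟩))
  · rcases H with h | hAC | hAB
    · exact absurd h hBC
    · refine Or.inr (Or.inl ⟨hACto12 hAC, fun h13 => ?_, hACtoL3 hAC⟩)
      exact hBC (by have := hc13 h13; omega)
    · refine Or.inr (Or.inr (Or.inl ⟨hABto13 hAB, fun h12 => ?_, hABtoL2 hAB⟩))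
      exact hBC (by have := hc12 h12; omega)
end

section
/- In a tree with nonnegative edge weights w, let c be the minimizer of the unweighted distance sum d(u,x)+d(v,x)+d(r,x) and let c' be a minimizer of the weighted distance sum W(x) = w(u,x)+w(v,x)+w(r,x), where w(a,b) is the total weight on the path from a to b. Then the weighted path distance w(c,c') is zero. -/
open SimpleGraph

namespace Stmt6Aux

variable {V : Type*} [DecidableEq V] {G : SimpleGraph V}

noncomputable def pa (hG : G.IsTree) (a b : V) : G.Walk a b :=
  (hG.existsUnique_path a b).choose

lemma pa_isPath (hG : G.IsTree) (a b : V) : (pa hG a b).IsPath :=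
  (hG.existsUnique_path a b).choose_spec.1

lemma pa_unique (hG : G.IsTree) {a b : V} (p : G.Walk a b) (hp : p.IsPath) :
    p = pa hG a b :=
  (hG.existsUnique_path a b).choose_spec.2 p hp

lemma dist_eq_pa (hG : G.IsTree) (a b : V) : G.dist a b = (pa hG a b).length := by
  refine le_antisymm (SimpleGraph.dist_le _) ?_
  obtain ⟨q, hq⟩ := (hG.isConnected.preconnected a b).exists_walk_length_eq_dist
  calc (pa hG a b).length = q.bypass.length := by
        rw [pa_unique hG q.bypass q.bypass_isPath]
    _ ≤ q.length := q.length_bypass_le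
    _ = G.dist a b := hq

lemma main (hG : G.IsTree) (x y : V) (hxy : G.Adj x y) (t : V) :
    (G.dist t y = G.dist t x + 1 ∧ pa hG t y = (pa hG t x).concat hxy) ∨
    (G.dist t x = G.dist t y + 1 ∧ pa hG t x = (pa hG t y).concat hxy.symm) := by
  by_cases hy : y ∈ (pa hG t x).support
  · right
    have htake := (pa_isPath hG t x).takeUntil hy
    have hdropPath := (pa_isPath hG t x).dropUntil hy
    have hcons : (Walk.cons hxy.symm Walk.nil : G.Walk y x).IsPath := by
      simp [Walk.cons_isPath_iff, hxy.ne']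
    have hdrop : (pa hG t x).dropUntil y hy = Walk.cons hxy.symm Walk.nil := by
      rw [pa_unique hG _ hdropPath, pa_unique hG _ hcons]
    have hpx : pa hG t x = ((pa hG t x).takeUntil y hy).concat hxy.symm := by
      rw [Walk.concat_eq_append, ← hdrop, Walk.take_spec]
    have hty : (pa hG t x).takeUntil y hy = pa hG t y := pa_unique hG _ htake
    refine ⟨?_, by rw [hpx, hty]⟩
    have hlen : (pa hG t x).length = ((pa hG t x).takeUntil y hy).length + 1 := by
      conv_lhs => rw [hpx]
      rw [Walk.length_concat]
    rw [dist_eq_pa hG t x, dist_eq_pa hG t y, ← hty, hlen]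
  · left
    have hconc : ((pa hG t x).concat hxy).IsPath := by
      have hp := (pa_isPath hG t x)
      rw [Walk.isPath_def] at hp ⊢
      rw [Walk.support_concat]
      simp [List.nodup_append, hp, hy]
      exact fun a ha hay => hy (hay ▸ ha)
    have hpy : pa hG t y = (pa hG t x).concat hxy := (pa_unique hG _ hconc).symm
    exact ⟨by rw [dist_eq_pa hG t x, dist_eq_pa hG t y, hpy, Walk.length_concat], hpy⟩

lemma wstep (hG : G.IsTree) (w : Sym2 V → ℕ) (W : V → V → ℕ)
    (hW : ∀ (a b : V) (p : G.Path a b), W a b = (p.1.edges.map w).sum)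
    {x y : V} (hxy : G.Adj x y) (t : V) :
    (G.dist t y = G.dist t x + 1 ∧ W t y = W t x + w s(x, y)) ∨
    (G.dist t x = G.dist t y + 1 ∧ W t x = W t y + w s(x, y)) := by
  have hWpa : ∀ a b : V, W a b = ((pa hG a b).edges.map w).sum := fun a b =>
    hW a b ⟨pa hG a b, pa_isPath hG a b⟩
  rcases main hG x y hxy t with ⟨hd, hp⟩ | ⟨hd, hp⟩
  · refine Or.inl ⟨hd, ?_⟩
    rw [hWpa t y, hWpa t x, hp, Walk.edges_concat]
    simp
  · refine Or.inr ⟨hd, ?_⟩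
    rw [hWpa t x, hWpa t y, hp, Walk.edges_concat]
    simp [Sym2.eq_swap]

lemma cont (hG : G.IsTree) {t x y z : V} (hxy : G.Adj x y) (hyz : G.Adj y z)
    (hzx : z ≠ x) (h1 : G.dist t y = G.dist t x + 1) :
    G.dist t z = G.dist t y + 1 := by
  rcases main hG y z hyz t with ⟨h, _⟩ | ⟨h2, hp2⟩
  · exact h
  exfalso
  have hleft : pa hG t y = (pa hG t x).concat hxy := by
    rcases main hG x y hxy t with ⟨_, hp⟩ | ⟨hd, _⟩
    · exact hp
    · omega
  rw [hp2] at hleft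
  obtain ⟨hv, -⟩ := Walk.concat_inj hleft
  exact hzx hv

lemma steps (hG : G.IsTree) (w : Sym2 V → ℕ) (W : V → V → ℕ)
    (hW : ∀ (a b : V) (p : G.Path a b), W a b = (p.1.edges.map w).sum)
    (u v r c : V) :
    ∀ {z e : V} (q : G.Walk z e) {y : V} (hyz : G.Adj y z),
      (Walk.cons hyz q).IsPath →
      ((G.dist u z = G.dist u y + 1 ∧ G.dist v z = G.dist v y + 1) ∨
       (G.dist u z = G.dist u y + 1 ∧ G.dist r z = G.dist r y + 1) ∨
       (G.dist v z = G.dist v y + 1 ∧ G.dist r z = G.dist r y + 1)) →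
      G.dist c z = G.dist c y + 1 →
      W u y + W v y + W r y + W c e ≤ W u e + W v e + W r e + W c y := by
  intro z e q
  induction q with
  | nil =>
    rename_i z0
    intro y hyz _ h2 hcz
    have key : ∀ t : V, G.dist t z0 = G.dist t y + 1 → W t z0 = W t y + w s(y, z0) := by
      intro t ht
      rcases wstep hG w W hW hyz t with ⟨h1, h2⟩ | ⟨h1, h2⟩ <;> omega
    have hCc := key c hcz
    rcases h2 with ⟨h1, h2⟩ | ⟨h1, h2⟩ | ⟨h1, h2⟩
    · have e1 := key u h1; have e2 := key v h2
      rcases wstep hG w W hW hyz r with ⟨_, e3⟩ | ⟨_, e3⟩ <;> omega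
    · have e1 := key u h1; have e2 := key r h2
      rcases wstep hG w W hW hyz v with ⟨_, e3⟩ | ⟨_, e3⟩ <;> omega
    · have e1 := key v h1; have e2 := key r h2
      rcases wstep hG w W hW hyz u with ⟨_, e3⟩ | ⟨_, e3⟩ <;> omega
  | @cons z z2 e0 hzz2 q ih =>
    intro y hyz hq h2 hcz
    have hq' : (Walk.cons hzz2 q).IsPath := ((Walk.cons_isPath_iff hyz _).1 hq).1
    have hz2mem : z2 ∈ (Walk.cons hzz2 q).support := by
      rw [Walk.support_cons]
      exact List.mem_cons_of_mem _ q.start_mem_support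
    have hy2 : z2 ≠ y := by
      rintro rfl
      exact ((Walk.cons_isPath_iff hyz _).1 hq).2 hz2mem
    have hcz2 : G.dist c z2 = G.dist c z + 1 := cont hG hyz hzz2 hy2 hcz
    have key : ∀ t : V, G.dist t z = G.dist t y + 1 → W t z = W t y + w s(y, z) := by
      intro t ht
      rcases wstep hG w W hW hyz t with ⟨h1', h2'⟩ | ⟨h1', h2'⟩ <;> omega
    have hCc := key c hcz
    rcases h2 with ⟨h1, h2⟩ | ⟨h1, h2⟩ | ⟨h1, h2⟩
    · have h1' := cont hG hyz hzz2 hy2 h1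
      have h2' := cont hG hyz hzz2 hy2 h2
      have hih := ih hzz2 hq' (Or.inl ⟨h1', h2'⟩) hcz2
      have e1 := key u h1; have e2 := key v h2
      rcases wstep hG w W hW hyz r with ⟨_, e3⟩ | ⟨_, e3⟩ <;> omega
    · have h1' := cont hG hyz hzz2 hy2 h1
      have h2' := cont hG hyz hzz2 hy2 h2
      have hih := ih hzz2 hq' (Or.inr (Or.inl ⟨h1', h2'⟩)) hcz2
      have e1 := key u h1; have e2 := key r h2
      rcases wstep hG w W hW hyz v with ⟨_, e3⟩ | ⟨_, e3⟩ <;> omega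
    · have h1' := cont hG hyz hzz2 hy2 h1
      have h2' := cont hG hyz hzz2 hy2 h2
      have hih := ih hzz2 hq' (Or.inr (Or.inr ⟨h1', h2'⟩)) hcz2
      have e1 := key v h1; have e2 := key r h2
      rcases wstep hG w W hW hyz u with ⟨_, e3⟩ | ⟨_, e3⟩ <;> omega

end Stmt6Aux

open Stmt6Aux in
/-- In a tree with edge weights 0 or 1, if `c` minimizes the unweighted distance sum
`d(u,x)+d(v,x)+d(r,x)` and `c'` minimizes the weighted distance sum
`W(x) = w(u,x)+w(v,x)+w(r,x)` (weighted path distance), then `w(c,c') = 0`. -/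
theorem stmt6 {V : Type*} [Fintype V] (G : SimpleGraph V) (hG : G.IsTree)
    (w : Sym2 V → ℕ) (hw01 : ∀ e, w e ≤ 1)
    (W : V → V → ℕ)
    (hW : ∀ (a b : V) (p : G.Path a b), W a b = (p.1.edges.map w).sum)
    (u v r c c' : V)
    (hc : ∀ x : V, G.dist u c + G.dist v c + G.dist r c ≤
      G.dist u x + G.dist v x + G.dist r x)
    (hc' : ∀ x : V, W u c' + W v c' + W r c' ≤ W u x + W v x + W r x) :
    W c c' = 0 := by
  classical
  have hWcc : W c c = 0 := by
    rw [hW c c ⟨Walk.nil, Walk.IsPath.nil⟩]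
    simp
  by_cases hcc : c = c'
  · rw [← hcc]; exact hWcc
  · cases hpa : pa hG c c' with
    | nil => exact absurd rfl hcc
    | cons hadj q =>
      rename_i z2
      have hpath : (Walk.cons hadj q).IsPath := by
        rw [← hpa]; exact pa_isPath hG c c'
      have base_t : ∀ t : V,
          G.dist t z2 = G.dist t c + 1 ∨ G.dist t c = G.dist t z2 + 1 := fun t =>
        (main hG c z2 hadj t).imp And.left And.left
      have hcbase : G.dist c z2 = G.dist c c + 1 := by
        rw [SimpleGraph.dist_self]
        exact SimpleGraph.dist_eq_one_iff_adj.2 hadj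
      have hD := hc z2
      have h2 : (G.dist u z2 = G.dist u c + 1 ∧ G.dist v z2 = G.dist v c + 1) ∨
          (G.dist u z2 = G.dist u c + 1 ∧ G.dist r z2 = G.dist r c + 1) ∨
          (G.dist v z2 = G.dist v c + 1 ∧ G.dist r z2 = G.dist r c + 1) := by
        rcases base_t u with hu | hu <;> rcases base_t v with hv | hv <;>
          rcases base_t r with hr | hr
        · exact Or.inl ⟨hu, hv⟩
        · exact Or.inl ⟨hu, hv⟩
        · exact Or.inr (Or.inl ⟨hu, hr⟩)
        · exfalso; omega
        · exact Or.inr (Or.inr ⟨hv, hr⟩)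
        · exfalso; omega
        · exfalso; omega
        · exfalso; omega
      have hsteps := steps hG w W hW u v r c q hadj hpath h2 hcbase
      have hmin := hc' c
      omega
end

section
/- In a tree, for any vertices u, v, r, let c be the minimizer of D(x)=d(u,x)+d(v,x)+d(r,x); then for every vertex c', the distance minimizer c lies on at least two of the three paths from c' to u, from c' to v, and from c' to r. -/
open SimpleGraph

private lemma keyB {V : Type*} [DecidableEq V] {G : SimpleGraph V} (hG : G.IsTree) {w c a t : V}
    (h : G.Adj w c) (ha : G.dist a w < G.dist a c) (ht : G.dist t c ≤ G.dist t w) :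
    G.dist a c + G.dist c t = G.dist a t := by
  have conn := hG.isConnected
  obtain ⟨A, hA⟩ := conn.exists_walk_length_eq_dist a w
  obtain ⟨B, hB⟩ := conn.exists_walk_length_eq_dist t c
  obtain ⟨S, hS⟩ := conn.exists_walk_length_eq_dist a t
  -- c is not in A
  have hcA : c ∉ A.support := by
    intro hc
    have h1 : G.dist a c ≤ (A.takeUntil c hc).length := SimpleGraph.dist_le _
    have h2 := A.length_takeUntil_le hc
    omega
  -- w is not in B
  have hwB : w ∉ B.support := by
    intro hw
    have h1 : G.dist t w ≤ (B.takeUntil w hw).length := SimpleGraph.dist_le _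
    have h2 : G.dist w c ≤ (B.dropUntil w hw).length := SimpleGraph.dist_le _
    have h3 : (B.takeUntil w hw).length + (B.dropUntil w hw).length = B.length := by
      rw [← SimpleGraph.Walk.length_append, B.take_spec hw]
    have h4 : 0 < G.dist w c := conn.pos_dist_of_ne h.ne
    omega
  -- c must be in S
  have hcS : c ∈ S.support := by
    by_contra hcS
    have hbridge : G.IsBridge s(w, c) :=
      SimpleGraph.isAcyclic_iff_forall_edge_isBridge.mp hG.IsAcyclic h
    have hwalk := (SimpleGraph.isBridge_iff_adj_and_forall_walk_mem_edges.mp hbridge)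
      (A.reverse.append (S.append B))
    rw [SimpleGraph.Walk.edges_append, SimpleGraph.Walk.edges_append, List.mem_append,
      List.mem_append] at hwalk
    rcases hwalk with hh | hh | hh
    · have : c ∈ A.reverse.support := SimpleGraph.Walk.snd_mem_support_of_mem_edges _ hh
      rw [SimpleGraph.Walk.support_reverse, List.mem_reverse] at this
      exact hcA this
    · exact hcS (SimpleGraph.Walk.snd_mem_support_of_mem_edges _ hh)
    · exact hwB (SimpleGraph.Walk.fst_mem_support_of_mem_edges _ hh)
  have h1 : G.dist a c ≤ (S.takeUntil c hcS).length := SimpleGraph.dist_le _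
  have h2 : G.dist c t ≤ (S.dropUntil c hcS).length := SimpleGraph.dist_le _
  have h3 : (S.takeUntil c hcS).length + (S.dropUntil c hcS).length = S.length := by
    rw [← SimpleGraph.Walk.length_append, S.take_spec hcS]
  have h4 : G.dist a t ≤ G.dist a c + G.dist c t := conn.dist_triangle
  omega

/-- In a tree, the minimizer `c` of `D(x)=d(u,x)+d(v,x)+d(r,x)` lies on at least two of
the three paths from any vertex `c'` to `u`, to `v`, and to `r`. -/
theorem stmt7 {V : Type*} [Fintype V] (G : SimpleGraph V) (hG : G.IsTree) (u v r c : V)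
    (hc : ∀ x : V, G.dist u c + G.dist v c + G.dist r c ≤
      G.dist u x + G.dist v x + G.dist r x) :
    ∀ c' : V,
      (G.onPath c c' u ∧ G.onPath c c' v) ∨
      (G.onPath c c' u ∧ G.onPath c c' r) ∨
      (G.onPath c c' v ∧ G.onPath c c' r) := by
  intro c'
  classical
  have conn := hG.isConnected
  by_cases hcc : c' = c
  · subst hcc
    left
    constructor <;> simp [SimpleGraph.onPath, SimpleGraph.dist_self]
  -- get a neighbor w of c towards c'
  obtain ⟨p, hp⟩ := conn.exists_walk_length_eq_dist c c'
  cases p with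
  | nil => exact absurd rfl hcc
  | cons hadj q =>
      rename_i w
      have hlen : q.length + 1 = G.dist c c' := by
        simpa [SimpleGraph.Walk.length_cons] using hp
      have hq : G.dist w c' ≤ q.length := SimpleGraph.dist_le q
      have hcw : G.dist c w ≤ 1 := by
        have := SimpleGraph.dist_le hadj.toWalk
        simpa using this
      have htri : G.dist c c' ≤ G.dist c w + G.dist w c' := conn.dist_triangle
      have hw1 : G.dist w c' + 1 = G.dist c c' := by omega
      -- each target is either closer to w, or c is on the path from c' to it
      have key : ∀ t : V, G.dist t w < G.dist t c ∨ G.onPath c c' t := by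
        intro t
        by_cases ht : G.dist t c ≤ G.dist t w
        · right
          have ha : G.dist c' w < G.dist c' c := by
            have e1 : G.dist c' w = G.dist w c' := SimpleGraph.dist_comm
            have e2 : G.dist c' c = G.dist c c' := SimpleGraph.dist_comm
            omega
          exact keyB hG hadj.symm ha ht
        · left; omega
      have hbu : G.dist u w ≤ G.dist u c + 1 := by
        have := conn.dist_triangle (u := u) (v := c) (w := w)
        have : G.dist c w ≤ 1 := hcw
        have := conn.dist_triangle (u := u) (v := c) (w := w)
        omega
      have hbv : G.dist v w ≤ G.dist v c + 1 := by
        have := conn.dist_triangle (u := v) (v := c) (w := w)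
        omega
      have hbr : G.dist r w ≤ G.dist r c + 1 := by
        have := conn.dist_triangle (u := r) (v := c) (w := w)
        omega
      have hD := hc w
      rcases key u with Lu | Pu
      · rcases key v with Lv | Pv
        · omega
        · rcases key r with Lr | Pr
          · omega
          · exact Or.inr (Or.inr ⟨Pv, Pr⟩)
      · rcases key v with Lv | Pv
        · rcases key r with Lr | Pr
          · omega
          · exact Or.inr (Or.inl ⟨Pu, Pr⟩)
        · exact Or.inl ⟨Pu, Pv⟩
end

section
/- Ternarization preserves the LCA up to owner: in the ternarized tree T' with edges inside an owner class weighted 0 and edges between owner classes weighted 1, if c' is a vertex of T' minimizing the weighted distance sum w(u,x)+w(v,x)+w(r,x) for original vertices u, v, r, then the owner of c' equals LCA_T(u,v,r), the unique minimizer of d(u,x)+d(v,x)+d(r,x) in T. -/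
open SimpleGraph

section Aux

variable {V : Type*} [DecidableEq V] {T : SimpleGraph V}

private lemma concat_isPath {a x z : V} {p : T.Walk a x} (hp : p.IsPath) (h : T.Adj x z)
    (hz : z ∉ p.support) : (p.concat h).IsPath := by
  rw [← Walk.isPath_reverse_iff, Walk.reverse_concat]
  refine Walk.IsPath.cons (hp.reverse) ?_
  rw [Walk.support_reverse, List.mem_reverse]
  exact hz

private lemma exists_shortest_avoiding (hconn : T.Connected) (a x z : V)
    (hz : T.dist a x < T.dist a z) :
    ∃ p : T.Walk a x, p.IsPath ∧ p.length = T.dist a x ∧ z ∉ p.support := by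
  obtain ⟨p, hp, hl⟩ := hconn.exists_path_of_dist a x
  refine ⟨p, hp, hl, fun hmem => ?_⟩
  have h1 : T.dist a z ≤ (p.takeUntil z hmem).length := dist_le _
  have h2 := Walk.length_takeUntil_le p hmem
  omega

private lemma dist_ne_of_adj (hT : T.IsTree) (a : V) {x z : V} (h : T.Adj x z) :
    T.dist a x ≠ T.dist a z := by
  intro heq
  obtain ⟨p, hp, hl⟩ := hT.isConnected.exists_path_of_dist a x
  have hzs : z ∉ p.support := by
    intro hmem
    have h1 : T.dist a z ≤ (p.takeUntil z hmem).length := dist_le _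
    have h2 : (p.takeUntil z hmem).length + (p.dropUntil z hmem).length = p.length := by
      rw [← Walk.length_append, Walk.take_spec]
    have h3 : (p.dropUntil z hmem).length ≠ 0 := by
      intro h0
      exact h.ne' (Walk.eq_of_length_eq_zero h0)
    omega
  obtain ⟨p2, hp2, hl2⟩ := hT.isConnected.exists_path_of_dist a z
  have hQ : (p.concat h).IsPath := concat_isPath hp h hzs
  have := hT.IsAcyclic.path_unique ⟨p.concat h, hQ⟩ ⟨p2, hp2⟩
  have hlen : (p.concat h).length = p2.length := by
    rw [Subtype.ext_iff] at this
    simp only at this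
    rw [this]
  rw [Walk.length_concat] at hlen
  omega

private lemma no_vee (hT : T.IsTree) (a : V) {x z z₂ : V} (hxz : T.Adj x z) (hz₂ : T.Adj z₂ z)
    (hne : x ≠ z₂) (h1 : T.dist a z = T.dist a x + 1) (h2 : T.dist a z₂ = T.dist a x) :
    False := by
  obtain ⟨p1, hp1, hl1, hzs1⟩ := exists_shortest_avoiding hT.isConnected a x z (by omega)
  obtain ⟨p2, hp2, hl2, hzs2⟩ := exists_shortest_avoiding hT.isConnected a z₂ z (by omega)
  have hQ1 : (p1.concat hxz).IsPath := concat_isPath hp1 hxz hzs1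
  have hQ2 : (p2.concat hz₂).IsPath := concat_isPath hp2 hz₂ hzs2
  have huniq := hT.IsAcyclic.path_unique ⟨p1.concat hxz, hQ1⟩ ⟨p2.concat hz₂, hQ2⟩
  have hedges : (p1.concat hxz).edges = (p2.concat hz₂).edges := by
    rw [Subtype.ext_iff] at huniq
    simp only at huniq
    rw [huniq]
  have hmem : s(x, z) ∈ (p2.concat hz₂).edges := by
    rw [← hedges, Walk.edges_concat]
    simp
  rw [Walk.edges_concat, List.concat_eq_append, List.mem_append] at hmem
  rcases hmem with hm | hm
  · exact hzs2 (Walk.snd_mem_support_of_mem_edges _ hm)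
  · simp only [List.mem_singleton, Sym2.eq_iff] at hm
    rcases hm with ⟨hm1, _⟩ | ⟨hm1, hm2⟩
    · exact hne hm1
    · exact hxz.ne hm1

private lemma slope1 (hT : T.IsTree) (a : V) {x z : V} (h : T.Adj x z) :
    T.dist a z = T.dist a x + 1 ∨ T.dist a x = T.dist a z + 1 := by
  have hne := dist_ne_of_adj hT a h
  have hxz : T.dist x z ≤ 1 := by
    simpa using dist_le (Walk.cons h Walk.nil)
  have hzx : T.dist z x ≤ 1 := by
    simpa using dist_le (Walk.cons h.symm Walk.nil)
  have h1 : T.dist a z ≤ T.dist a x + T.dist x z := hT.isConnected.dist_triangle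
  have h2 : T.dist a x ≤ T.dist a z + T.dist z x := hT.isConnected.dist_triangle
  omega

private lemma mono1 (hT : T.IsTree) (a : V) :
    ∀ (n : ℕ) {x z y : V} (h : T.Adj x z) (q : T.Walk z y), q.length = n →
      (Walk.cons h q).IsPath → T.dist a z = T.dist a x + 1 →
      T.dist a y = T.dist a x + 1 + n := by
  intro n
  induction n with
  | zero =>
    intro x z y h q hq hp hd
    have hzy : z = y := Walk.eq_of_length_eq_zero hq
    subst hzy
    simpa using hd
  | succ n ih =>
    intro x z y h q hq hp hd
    cases q with
    | nil => simp at hq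
    | cons h₂ q₂ =>
      rename_i z₂
      have hp' := (Walk.cons_isPath_iff _ _).mp hp
      have hxz₂ : x ≠ z₂ := by
        intro e
        subst e
        exact hp'.2 (by simp [Walk.support_cons])
      have hd₂ : T.dist a z₂ = T.dist a z + 1 := by
        rcases slope1 hT a h₂ with h' | h'
        · exact h'
        · exact absurd (no_vee hT a h h₂.symm hxz₂ hd (by omega)) not_false
      have := ih h₂ q₂ (by simpa using hq) hp'.1 hd₂
      omega

private lemma two_up (hT : T.IsTree) (A B C x y z : V) (h : T.Adj x z) (q : T.Walk z y)
    (hp : (Walk.cons h q).IsPath)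
    (hA : T.dist A z = T.dist A x + 1) (hB : T.dist B z = T.dist B x + 1)
    (heq : T.dist A y + T.dist B y + T.dist C y = T.dist A x + T.dist B x + T.dist C x) :
    False := by
  have h1 := mono1 hT A q.length h q rfl hp hA
  have h2 := mono1 hT B q.length h q rfl hp hB
  have h3 : T.dist C x ≤ T.dist C y + (q.length + 1) := by
    have ht : T.dist C x ≤ T.dist C y + T.dist y x := hT.isConnected.dist_triangle
    have hyx : T.dist y x ≤ q.length + 1 := by
      have := dist_le (Walk.cons h q).reverse
      simpa [Walk.length_reverse] using this
    omega
  omega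

private lemma median_unique (hT : T.IsTree) (u v r x y : V)
    (hx : ∀ t, T.dist u x + T.dist v x + T.dist r x ≤ T.dist u t + T.dist v t + T.dist r t)
    (hy : T.dist u y + T.dist v y + T.dist r y = T.dist u x + T.dist v x + T.dist r x) :
    y = x := by
  by_contra hne
  obtain ⟨p, hp, hl⟩ := hT.isConnected.exists_path_of_dist x y
  cases p with
  | nil => exact hne rfl
  | cons h q =>
    rename_i z
    have hfz := hx z
    rcases slope1 hT u h with hu | hu <;> rcases slope1 hT v h with hv | hv <;>
      rcases slope1 hT r h with hr | hr
    · exact two_up hT u v r x y z h q hp hu hv (by omega)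
    · exact two_up hT u v r x y z h q hp hu hv (by omega)
    · exact two_up hT u r v x y z h q hp hu hr (by omega)
    · omega
    · exact two_up hT v r u x y z h q hp hv hr (by omega)
    · omega
    · omega
    · omega

end Aux

section Aux2

variable {V D : Type*} [DecidableEq V] {T : SimpleGraph V} {T' : SimpleGraph (V ⊕ D)}
  {o : V ⊕ D → V}

private lemma lowerA (hconn : T.Connected)
    (hcross : ∀ e ∈ T'.edgeSet, ¬ (Sym2.map o e).IsDiag → Sym2.map o e ∈ T.edgeSet)
    {y x : V ⊕ D} (p : T'.Walk y x) :
    T.dist (o y) (o x) ≤ (p.edges.filter fun e => ¬ (Sym2.map o e).IsDiag).length := by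
  induction p with
  | nil => simp
  | cons h p ih =>
    rename_i a b c
    by_cases hd : (Sym2.map o s(a, b)).IsDiag
    · have hab : o a = o b := by rwa [Sym2.map_pair_eq, Sym2.mk_isDiag_iff] at hd
      rw [Walk.edges_cons, List.filter_cons_of_neg (by simpa using hd), hab]
      exact ih
    · have hadj : T.Adj (o a) (o b) := by
        have := hcross s(a, b) (T'.mem_edgeSet.mpr h) hd
        rwa [Sym2.map_pair_eq, mem_edgeSet] at this
      rw [Walk.edges_cons, List.filter_cons_of_pos (by simpa using hd), List.length_cons]
      have ht : T.dist (o a) (o c) ≤ T.dist (o a) (o b) + T.dist (o b) (o c) :=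
        hconn.dist_triangle
      have h1 : T.dist (o a) (o b) ≤ 1 := by
        simpa using dist_le (Walk.cons hadj Walk.nil)
      omega

private lemma fiberwalk (hfiber : ∀ v : V, (T'.induce {x | o x = v}).Connected)
    {y z : V ⊕ D} (h : o y = o z) :
    ∃ p : T'.Walk y z, (p.edges.filter fun e => ¬ (Sym2.map o e).IsDiag).length = 0 := by
  obtain ⟨W⟩ := (hfiber (o y)).preconnected ⟨y, rfl⟩ ⟨z, h.symm⟩
  refine ⟨W.map (Embedding.induce {x | o x = o y}).toHom, ?_⟩
  rw [List.length_eq_zero_iff, List.filter_eq_nil_iff]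
  intro e he
  erw [Walk.edges_map, List.mem_map] at he
  obtain ⟨e', _, rfl⟩ := he
  simp only [decide_not, Bool.not_eq_true', decide_eq_false_iff_not, not_not]
  rw [Sym2.map_map]
  have : ∃ c d : ({x | o x = o y} : Set (V ⊕ D)), e' = s(c, d) := by
    induction e' using Sym2.ind with
    | _ c d => exact ⟨c, d, rfl⟩
  obtain ⟨c, d, rfl⟩ := this
  rw [Sym2.map_pair_eq, Sym2.mk_isDiag_iff]
  exact (c.2 : o c.1 = o y).trans (d.2 : o d.1 = o y).symm

private lemma upperC (hfiber : ∀ v : V, (T'.induce {x | o x = v}).Connected)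
    (hbij : ∀ f ∈ T.edgeSet, ∃! e, e ∈ T'.edgeSet ∧ ¬ (Sym2.map o e).IsDiag ∧
      Sym2.map o e = f)
    {a b : V} (q : T.Walk a b) :
    ∀ (y z : V ⊕ D), o y = a → o z = b → ∃ p : T'.Walk y z,
      (p.edges.filter fun e => ¬ (Sym2.map o e).IsDiag).length ≤ q.length := by
  induction q with
  | nil =>
    intro y z hy hz
    obtain ⟨p, hp⟩ := fiberwalk hfiber (hy.trans hz.symm)
    exact ⟨p, by omega⟩
  | cons hab q ih =>
    rename_i a a₁ b
    intro y z hy hz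
    have hkey : ∃ w₁ w₂ : V ⊕ D, T'.Adj w₁ w₂ ∧ o w₁ = a ∧ o w₂ = a₁ := by
      obtain ⟨e, ⟨heE, -, hmap⟩, -⟩ := hbij s(a, a₁) (T.mem_edgeSet.mpr hab)
      have : ∃ y₁ y₂ : V ⊕ D, e = s(y₁, y₂) := by
        induction e using Sym2.ind with
        | _ y₁ y₂ => exact ⟨y₁, y₂, rfl⟩
      obtain ⟨y₁, y₂, rfl⟩ := this
      rw [Sym2.map_pair_eq, Sym2.eq_iff] at hmap
      rcases hmap with ⟨h1, h2⟩ | ⟨h1, h2⟩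
      · exact ⟨y₁, y₂, T'.mem_edgeSet.mp heE, h1, h2⟩
      · exact ⟨y₂, y₁, (T'.mem_edgeSet.mp heE).symm, h2, h1⟩
    obtain ⟨w₁, w₂, hadj, hw₁, hw₂⟩ := hkey
    obtain ⟨p₀, hp₀⟩ := fiberwalk hfiber (hy.trans hw₁.symm)
    obtain ⟨p₁, hp₁⟩ := ih w₂ z hw₂ hz
    refine ⟨p₀.append (Walk.cons hadj p₁), ?_⟩
    have hnd : ¬ (Sym2.map o s(w₁, w₂)).IsDiag := by
      rw [Sym2.map_pair_eq, Sym2.mk_isDiag_iff, hw₁, hw₂]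
      exact hab.ne
    rw [Walk.edges_append, List.filter_append, List.length_append, Walk.edges_cons,
      List.filter_cons_of_pos (by simpa using hnd), List.length_cons, Walk.length_cons]
    omega

end Aux2

/-- Ternarization preserves the LCA up to owner: in the ternarized tree `T'` with dummy
(same-owner) edges weighted 0 and cross-owner edges weighted 1 (so the weighted distance
`w` counts cross edges on the unique path), any minimizer `c'` of
`w(u,x)+w(v,x)+w(r,x)` over `T'` has owner equal to the LCA of `u,v,r` in `T`,
the unique minimizer of `d(u,x)+d(v,x)+d(r,x)`. -/
theorem stmt11 {V D : Type*} [Fintype V] [Fintype D] [DecidableEq V]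
    (T : SimpleGraph V) (hT : T.IsTree)
    (T' : SimpleGraph (V ⊕ D)) (hT' : T'.IsTree)
    (o : V ⊕ D → V) (ho : ∀ v : V, o (Sum.inl v) = v)
    (hfiber : ∀ v : V, (T'.induce {x | o x = v}).Connected)
    (hcross : ∀ e ∈ T'.edgeSet, ¬ (Sym2.map o e).IsDiag → Sym2.map o e ∈ T.edgeSet)
    (hbij : ∀ f ∈ T.edgeSet, ∃! e, e ∈ T'.edgeSet ∧ ¬ (Sym2.map o e).IsDiag ∧
      Sym2.map o e = f)
    (w : (V ⊕ D) → (V ⊕ D) → ℕ)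
    (hw : ∀ (a b : V ⊕ D) (p : T'.Path a b),
      w a b = (p.1.edges.filter fun e => ¬ (Sym2.map o e).IsDiag).length)
    (u v r : V) (c : V)
    (hc : ∀ x : V, T.dist u c + T.dist v c + T.dist r c ≤
      T.dist u x + T.dist v x + T.dist r x)
    (c' : V ⊕ D)
    (hc' : ∀ x : V ⊕ D,
      w (Sum.inl u) c' + w (Sum.inl v) c' + w (Sum.inl r) c' ≤
      w (Sum.inl u) x + w (Sum.inl v) x + w (Sum.inl r) x) :
    o c' = c := by
  classical
  have key : ∀ (a : V) (x : V ⊕ D), w (Sum.inl a) x = T.dist a (o x) := by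
    intro a x
    obtain ⟨W⟩ := hT'.isConnected.preconnected (Sum.inl a) x
    have hlow : T.dist a (o x) ≤ w (Sum.inl a) x := by
      rw [hw (Sum.inl a) x W.toPath]
      have := lowerA hT.isConnected hcross W.toPath.1
      rwa [ho] at this
    have hupp : w (Sum.inl a) x ≤ T.dist a (o x) := by
      obtain ⟨q, hq⟩ := hT.isConnected.exists_walk_length_eq_dist a (o x)
      obtain ⟨p, hp⟩ := upperC hfiber hbij q (Sum.inl a) x (ho a) rfl
      rw [hw (Sum.inl a) x p.toPath]
      have hsub : ((p.toPath.1.edges.filter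
            fun e => ¬ (Sym2.map o e).IsDiag).length)
          ≤ ((p.edges.filter fun e => ¬ (Sym2.map o e).IsDiag).length) := by
        refine List.Subperm.length_le (List.subperm_of_subset ?_ ?_)
        · exact List.Nodup.filter _ (Walk.bypass_isPath p).isTrail.edges_nodup
        · intro e he
          rw [List.mem_filter] at he ⊢
          exact ⟨Walk.edges_toPath_subset p he.1, he.2⟩
      exact hsub.trans (hp.trans hq.le)
    omega
  have h1 := hc' (Sum.inl c)
  rw [key u c', key v c', key r c', key u (Sum.inl c), key v (Sum.inl c), key r (Sum.inl c),
    ho c] at h1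
  exact median_unique hT u v r c (o c') hc (le_antisymm h1 (hc (o c')))
end
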